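/- arXiv:2204.12273 — 3 statements merged into one kernel-verified Lean document; each statement's English description precedes it below -/
import Mathlib

section
/- Let R be a ring, m and N central elements, and let b, and a − N be units of R, with a·b − b·a = (m+1)·b. Define c = b⁻¹·(a−N)·(a+N·m) and d = (a−N)⁻¹·b. Then c·d − d·c = m+1. -/
/-- If `m, N` are central, `b` and `a − N` are units and `a·b − b·a = (m+1)·b`, then
`c = b⁻¹·(a−N)·(a+Nm)` and `d = (a−N)⁻¹·b` satisfy `c·d − d·c = m+1`. -/
theorem stmt2 (R : Type*) [Ring R] (m N a b : R)
    (hm : ∀ x : R, m * x = x * m) (hN : ∀ x : R, N * x = x * N)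
    (ha : IsUnit (a - N)) (hb : IsUnit b)
    (hab : a * b - b * a = (m + 1) * b) :
    (Ring.inverse b * ((a - N) * (a + N * m))) * (Ring.inverse (a - N) * b)
      - (Ring.inverse (a - N) * b) * (Ring.inverse b * ((a - N) * (a + N * m)))
      = m + 1 := by
  set x := Ring.inverse b with hx
  set y := Ring.inverse (a - N) with hy
  have hb1 : x * b = 1 := Ring.inverse_mul_cancel b hb
  have hb2 : b * x = 1 := Ring.mul_inverse_cancel b hb
  have ha1 : y * (a - N) = 1 := Ring.inverse_mul_cancel _ ha
  have ha2 : (a - N) * y = 1 := Ring.mul_inverse_cancel _ ha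
  have hcomm : (a - N) * (a + N * m) = (a + N * m) * (a - N) := by
    have h1 : N * a = a * N := hN a
    have h2 : N * (m * a) = a * (N * m) := by rw [hm a, ← mul_assoc, hN a, mul_assoc]
    noncomm_ring
    rw [h2, hm N, h1]
    abel
  have hcd : (x * ((a - N) * (a + N * m))) * (y * b) = x * (a + N * m) * b := by
    rw [hcomm]
    calc x * ((a + N * m) * (a - N)) * (y * b)
        = x * (a + N * m) * ((a - N) * y) * b := by noncomm_ring
      _ = x * (a + N * m) * b := by rw [ha2, mul_one]
  have hdc : (y * b) * (x * ((a - N) * (a + N * m))) = a + N * m := by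
    calc (y * b) * (x * ((a - N) * (a + N * m)))
        = y * (b * x) * ((a - N) * (a + N * m)) := by noncomm_ring
      _ = (y * (a - N)) * (a + N * m) := by rw [hb2, mul_one, mul_assoc]
      _ = a + N * m := by rw [ha1, one_mul]
  rw [hcd, hdc]
  have hab' : a * b = b * a + (m + 1) * b := by
    rw [← hab]; noncomm_ring
  have hm1 : (m + 1) * b = b * (m + 1) := by
    rw [add_mul, mul_add, hm b, mul_one, one_mul]
  calc x * (a + N * m) * b - (a + N * m)
      = x * (a * b) + x * ((N * m) * b) - (a + N * m) := by noncomm_ring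
    _ = x * (b * a + b * (m + 1)) + x * (b * (N * m)) - (a + N * m) := by
        have hNm : (N * m) * b = b * (N * m) := by
          rw [mul_assoc, hm b, ← mul_assoc, hN b, mul_assoc]
        rw [hab', hm1, hNm]
    _ = (x * b) * a + (x * b) * (m + 1) + (x * b) * (N * m) - (a + N * m) := by
        noncomm_ring
    _ = m + 1 := by rw [hb1]; noncomm_ring
end

section
/- Let m, N be real parameters with m a positive integer and ħ ≠ 0. As operators on smooth functions on (0,∞), ħ·z^{−(m+1)}·(a − N)·(a + N·m) equals ħ·z^{1−m}·(d²/dz²) + z^{m−1}/ħ − m·ħ·(2N+m)(2N−1)/(4z^{m+1}) + N(m−1)/z + (2 + ħ(1−N)(1−m)/z^m)·(d/dz), where a = z·(d/dz) − m/2 + z^m/ħ. -/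
/-- The higher BGW Kac–Schwarz operator `a = z·(d/dz) − m/2 + z^m/hbar`. -/
noncomputable def opA (m : ℕ) (hbar : ℝ) (g : ℝ → ℝ) : ℝ → ℝ :=
  fun z => z * deriv g z - ((m : ℝ) / 2) * g z + z ^ m / hbar * g z

/-- Explicit form of the deformed operator `c_m^N = hbar·z^{−(m+1)}·(a−N)(a+Nm)`
on smooth functions on `(0,∞)`. -/
theorem stmt6 (m : ℕ) (hm : 0 < m) (N : ℝ) (hbar : ℝ) (hhbar : hbar ≠ 0)
    (f : ℝ → ℝ) (hf : ContDiffOn ℝ (⊤ : ℕ∞) f (Set.Ioi 0)) :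
    ∀ z ∈ Set.Ioi (0 : ℝ),
      hbar * z ^ (-((m : ℤ) + 1)) *
          (opA m hbar (fun w => opA m hbar f w + N * (m : ℝ) * f w) z
            - N * (opA m hbar f z + N * (m : ℝ) * f z)) =
        hbar * z ^ ((1 : ℤ) - m) * deriv (deriv f) z + z ^ ((m : ℤ) - 1) / hbar * f z
          - (m : ℝ) * hbar * (2 * N + m) * (2 * N - 1) / (4 * z ^ ((m : ℤ) + 1)) * f z
          + N * ((m : ℝ) - 1) / z * f z
          + (2 + hbar * (1 - N) * (1 - (m : ℝ)) / z ^ m) * deriv f z := by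
  intro z hz
  have hz0 : (0:ℝ) < z := hz
  have hzne : z ≠ 0 := ne_of_gt hz0
  have hopen : IsOpen (Set.Ioi (0:ℝ)) := isOpen_Ioi
  have hf' : ContDiffOn ℝ (⊤ : ℕ∞) (deriv f) (Set.Ioi 0) :=
    hf.deriv_of_isOpen hopen (by simp)
  have hd1 : ∀ w ∈ Set.Ioi (0:ℝ), HasDerivAt f (deriv f w) w := fun w hw =>
    ((hf.contDiffAt (hopen.mem_nhds hw)).differentiableAt (by simp)).hasDerivAt
  have hd2 : HasDerivAt (deriv f) (deriv (deriv f) z) z :=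
    ((hf'.contDiffAt (hopen.mem_nhds hz)).differentiableAt (by simp)).hasDerivAt
  -- derivative of the inner function g at z
  have hgd : HasDerivAt (fun w => opA m hbar f w + N * (m : ℝ) * f w)
      ((deriv f z + z * deriv (deriv f) z) - ((m:ℝ)/2) * deriv f z
        + ((m : ℝ) * z ^ (m-1) / hbar * f z + z ^ m / hbar * deriv f z)
        + N * m * deriv f z) z := by
    have h1 : HasDerivAt (fun w => w * deriv f w) (1 * deriv f z + z * deriv (deriv f) z) z :=
      (hasDerivAt_id z).mul hd2
    have h2 : HasDerivAt (fun w => ((m:ℝ)/2) * f w) (((m:ℝ)/2) * deriv f z) z :=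
      (hd1 z hz).const_mul _
    have h3 : HasDerivAt (fun w : ℝ => w ^ m / hbar * f w)
        (((m:ℝ) * z ^ (m-1) / hbar) * f z + z ^ m / hbar * deriv f z) z := by
      have hp : HasDerivAt (fun w : ℝ => w ^ m / hbar) ((m:ℝ) * z ^ (m-1) / hbar) z := by
        simpa using (hasDerivAt_pow m z).div_const hbar
      exact hp.mul (hd1 z hz)
    have h4 : HasDerivAt (fun w => N * (m:ℝ) * f w) (N * m * deriv f z) z :=
      (hd1 z hz).const_mul _
    have := ((h1.sub h2).add h3).add h4
    simpa [opA, mul_comm, Pi.add_def, Pi.sub_def] using this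
  have hzm : z ^ (m-1) = z ^ m / z := by
    field_simp
    rw [← pow_succ, Nat.sub_add_cancel hm]
  have hderivg : deriv (fun w => opA m hbar f w + N * (m : ℝ) * f w) z = (deriv f z + z * deriv (deriv f) z) - ((m:ℝ)/2) * deriv f z
        + ((m : ℝ) * (z ^ m / z) / hbar * f z + z ^ m / hbar * deriv f z)
        + N * m * deriv f z := by rw [hgd.deriv, hzm]
  simp only [opA] at hderivg ⊢
  rw [hderivg]
  have e1 : z ^ (-((m : ℤ) + 1)) = (z ^ (m+1))⁻¹ := by
    rw [zpow_neg]
    norm_cast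
  have e2 : z ^ ((1:ℤ) - m) = z / z ^ m := by
    rw [zpow_sub₀ hzne]
    norm_cast
    simp [div_eq_mul_inv]
  have e3 : z ^ ((m:ℤ) - 1) = z ^ m / z := by
    rw [zpow_sub₀ hzne]
    norm_cast
    simp [div_eq_mul_inv]
  have e4 : z ^ ((m:ℤ) + 1) = z ^ (m+1) := by norm_cast
  rw [e1, e2, e3, e4]
  field_simp
  ring
end

section
/- For integers k, j, define operators on Laurent polynomials over ℚ: j_k = multiplication by z^k, l_k = −z^k·(θ + (k+1)/2), and m_k = z^k·(θ² + (k+1)θ + (k+1)(k+2)/6), where θ = z·(d/dz). Then [j_k, m_j] = 2k·l_{k+j} and [l_k, m_j] = (2k−j)·m_{k+j} + (1/6)·k·(k²−1)·j_{k+j}. -/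
/- We model the Laurent polynomial ring `ℚ[z, z⁻¹]` by its coefficient space `ℤ →₀ ℚ`
(the basis vector at `n` corresponding to `z^n`). -/

/-- Multiplication by `z^k`. -/
noncomputable def Jop (k : ℤ) : (ℤ →₀ ℚ) →ₗ[ℚ] (ℤ →₀ ℚ) :=
  Finsupp.lmapDomain ℚ ℚ (· + k)

/-- The Euler operator `θ = z·(d/dz)`, `θ(z^n) = n·z^n`. -/
noncomputable def euler : (ℤ →₀ ℚ) →ₗ[ℚ] (ℤ →₀ ℚ) :=
  Finsupp.lsum ℚ fun n : ℤ => (n : ℚ) • Finsupp.lsingle n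

/-- `l_k = −z^k·(θ + (k+1)/2)`. -/
noncomputable def lop (k : ℤ) : (ℤ →₀ ℚ) →ₗ[ℚ] (ℤ →₀ ℚ) :=
  -(Jop k ∘ₗ (euler + (((k : ℚ) + 1) / 2) • LinearMap.id))

/-- `m_k = z^k·(θ² + (k+1)θ + (k+1)(k+2)/6)`. -/
noncomputable def mop (k : ℤ) : (ℤ →₀ ℚ) →ₗ[ℚ] (ℤ →₀ ℚ) :=
  Jop k ∘ₗ (euler ∘ₗ euler + ((k : ℚ) + 1) • euler
    + ((((k : ℚ) + 1) * ((k : ℚ) + 2)) / 6) • LinearMap.id)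

lemma Jop_single (k n : ℤ) (a : ℚ) : Jop k (Finsupp.single n a) = Finsupp.single (n + k) a := by
  show Finsupp.mapDomain _ _ = _
  exact Finsupp.mapDomain_single

lemma euler_single (n : ℤ) (a : ℚ) : euler (Finsupp.single n a) = (n : ℚ) • Finsupp.single n a := by
  show Finsupp.lsum ℚ (fun n : ℤ => (n : ℚ) • Finsupp.lsingle n) (Finsupp.single n a) = _
  rw [Finsupp.lsum_single]
  rfl

/-- `[j_k, m_j] = 2k·l_{k+j}` and `[l_k, m_j] = (2k−j)·m_{k+j} + (1/6)k(k²−1)·j_{k+j}`. -/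
theorem stmt8 : ∀ k j : ℤ,
    Jop k ∘ₗ mop j - mop j ∘ₗ Jop k = (2 * (k : ℚ)) • lop (k + j) ∧
    lop k ∘ₗ mop j - mop j ∘ₗ lop k =
      (2 * (k : ℚ) - (j : ℚ)) • mop (k + j)
        + ((1 / 6 : ℚ) * (k : ℚ) * ((k : ℚ) ^ 2 - 1)) • Jop (k + j) := by
  intro k j
  constructor <;>
  · apply Finsupp.lhom_ext' (fun n => ?_)
    apply LinearMap.ext_ring
    simp only [LinearMap.coe_comp, Function.comp_apply, Finsupp.lsingle_apply,
      LinearMap.sub_apply, LinearMap.add_apply, LinearMap.smul_apply, LinearMap.neg_apply,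
      LinearMap.id_apply, mop, lop, Jop_single, euler_single, map_add, map_smul, map_neg,
      Finsupp.smul_single, smul_eq_mul, smul_smul]
    simp only [← Finsupp.single_neg, Finsupp.smul_single, smul_eq_mul, ← Finsupp.single_add,
      ← Finsupp.single_sub]
    rw [show n + k + j = n + j + k by ring, show n + (k + j) = n + j + k by ring,
      ← Finsupp.single_sub]
    congr 1
    push_cast
    ring
end
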